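/- For each integer 1 ≤ k ≤ 7, sup_{p ∈ (0,1)} L(k,p) = 1/k, and this supremum is not attained (L(k,p) < 1/k for all p ∈ (0,1)). -/

import Mathlib

open Real Set Filter

/-- Expected number of tests per person in the Dorfman two-stage procedure
with group size `k` and prevalence `p`: `E 1 p = 1` and
`E k p = 1 - (1-p)^k + 1/k` for `k ≥ 2`. -/
noncomputable def E (k : ℕ) (p : ℝ) : ℝ :=
  if k = 1 then 1 else 1 - (1 - p) ^ k + 1 / k

/-- Optimal expected number of tests per person: infimum over group sizes `k ≥ 1`. -/
noncomputable def Estar (p : ℝ) : ℝ := ⨅ k : ℕ+, E k p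

/-- Loss of using group size `k` at prevalence `p`. -/
noncomputable def L (k : ℕ) (p : ℝ) : ℝ := E k p - Estar p

/-!
With `q = 1 - p`, the bound `L k p < 1/k` says `E k p - 1/k < Estar p`. For `k ≤ 7` the left side is
at most `1 - q^7`, and `E j p` exceeds `1 - q^7` by a margin independent of `j`: by `q^7` for
`j = 1`, by `1/j - (q^j - q^7)`, a polynomial inequality, for `2 ≤ j ≤ 7`, and by at least
`q^7 - q^8 = q^7 p` for `j ≥ 8`. So the infimum `Estar p` stays strictly above `1 - q^7`.

The supremum is approached as `p → 0⁺`: there `E k p ≥ 1/k` while `Estar p ≤ E j p → 1/j`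
for every `j`, so `Estar p → 0`.
-/

open Topology

section Dorfman

variable {k j n : ℕ} {p : ℝ}

theorem E_one (p : ℝ) : E 1 p = 1 := if_pos rfl

theorem E_of_ne_one (hk : k ≠ 1) (p : ℝ) : E k p = 1 - (1 - p) ^ k + 1 / k := if_neg hk

theorem one_div_le_E (hk : 1 ≤ k) (hp0 : 0 ≤ p) (hp1 : p ≤ 1) : 1 / (k : ℝ) ≤ E k p := by
  rcases eq_or_ne k 1 with rfl | hk1
  · simp [E_one]
  · rw [E_of_ne_one hk1]
    linarith [pow_le_one₀ (n := k) (sub_nonneg.2 hp1) (by linarith : 1 - p ≤ 1)]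

theorem E_sub_one_div_le_one_sub_pow (hk : 1 ≤ k) (hkn : k ≤ n) (hp0 : 0 ≤ p) (hp1 : p ≤ 1) :
    E k p - 1 / k ≤ 1 - (1 - p) ^ n := by
  have hq1 : (1 - p) ^ n ≤ 1 := pow_le_one₀ (sub_nonneg.2 hp1) (by linarith)
  rcases eq_or_ne k 1 with rfl | hk1
  · simp [E_one, hq1]
  · rw [E_of_ne_one hk1]
    linarith [pow_le_pow_of_le_one (sub_nonneg.2 hp1) (by linarith : 1 - p ≤ 1) hkn]

theorem E_nonneg (hj : 1 ≤ j) (hp0 : 0 ≤ p) (hp1 : p ≤ 1) : 0 ≤ E j p :=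
  (one_div_nonneg.2 (Nat.cast_nonneg _)).trans (one_div_le_E hj hp0 hp1)

theorem bddBelow_range_E (hp0 : 0 ≤ p) (hp1 : p ≤ 1) : BddBelow (range fun j : ℕ+ => E j p) :=
  ⟨0, by rintro _ ⟨j, rfl⟩; exact E_nonneg j.pos hp0 hp1⟩

theorem Estar_le_E (hp0 : 0 ≤ p) (hp1 : p ≤ 1) (j : ℕ+) : Estar p ≤ E j p :=
  ciInf_le (bddBelow_range_E hp0 hp1) j

theorem Estar_nonneg (hp0 : 0 ≤ p) (hp1 : p ≤ 1) : 0 ≤ Estar p :=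
  le_ciInf fun j => E_nonneg j.pos hp0 hp1

-- The tightest case is `j = 3`, where `q ^ 3 - q ^ 7 ≤ 0.303`.
theorem pow_sub_pow_seven_add_le {q : ℝ} (hq : 0 ≤ q) (hj2 : 2 ≤ j) (hj7 : j ≤ 7) :
    q ^ j - q ^ 7 + 1 / 100 ≤ 1 / j := by
  interval_cases j <;> norm_num <;>
    nlinarith [pow_nonneg hq 2, pow_nonneg hq 3, pow_nonneg hq 7, sq_nonneg q, sq_nonneg (q - 4 / 5),
      sq_nonneg (q - 6 / 7), sq_nonneg (q ^ 2 - q), sq_nonneg (q ^ 3 - q)]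

theorem one_sub_pow_seven_add_le_E (hj : 1 ≤ j) (hp0 : 0 ≤ p) (hp1 : p ≤ 1) :
    1 - (1 - p) ^ 7 + (1 - p) ^ 7 * p / 100 ≤ E j p := by
  have hq0 : 0 ≤ 1 - p := by linarith
  have hq1 : 1 - p ≤ 1 := by linarith
  have hgap_nonneg : 0 ≤ (1 - p) ^ 7 * p := mul_nonneg (pow_nonneg hq0 7) hp0
  have hgap_le : (1 - p) ^ 7 * p ≤ 1 := mul_le_one₀ (pow_le_one₀ hq0 hq1) hp0 hp1
  rcases eq_or_ne j 1 with rfl | hj1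
  · linarith [E_one p, mul_le_of_le_one_right (pow_nonneg hq0 7) hp1]
  rw [E_of_ne_one hj1]
  rcases le_or_gt j 7 with hj7 | hj8
  · linarith [pow_sub_pow_seven_add_le hq0 (by omega) hj7]
  · have hqj : (1 - p) ^ j ≤ (1 - p) ^ 7 - (1 - p) ^ 7 * p :=
      calc (1 - p) ^ j ≤ (1 - p) ^ 8 := pow_le_pow_of_le_one hq0 hq1 hj8
        _ = (1 - p) ^ 7 - (1 - p) ^ 7 * p := by ring
    linarith [one_div_nonneg.2 (Nat.cast_nonneg (α := ℝ) j)]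

theorem one_sub_pow_seven_lt_Estar (hp0 : 0 < p) (hp1 : p < 1) : 1 - (1 - p) ^ 7 < Estar p := by
  have hgap : 0 < (1 - p) ^ 7 * p / 100 := by
    have : 0 < 1 - p := by linarith
    positivity
  have hle : 1 - (1 - p) ^ 7 + (1 - p) ^ 7 * p / 100 ≤ Estar p :=
    le_ciInf fun j => one_sub_pow_seven_add_le_E j.pos hp0.le hp1.le
  linarith

theorem tendsto_Estar_nhdsGT_zero : Tendsto Estar (𝓝[>] 0) (𝓝 0) := by
  have hI : ∀ᶠ p in 𝓝[>] (0 : ℝ), p ∈ Ioo 0 1 := Ioo_mem_nhdsGT one_pos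
  refine tendsto_order.2 ⟨fun a ha => hI.mono fun p hp => ha.trans_le (Estar_nonneg hp.1.le hp.2.le),
    fun ε hε => ?_⟩
  obtain ⟨m, hm⟩ := exists_nat_one_div_lt hε
  have hj1 : m + 2 ≠ 1 := by omega
  have hEj : Continuous (E (m + 2)) := by
    rw [funext (E_of_ne_one hj1)]
    fun_prop
  have hEj0 : E (m + 2) 0 < ε := by
    refine lt_of_le_of_lt ?_ hm
    rw [E_of_ne_one hj1]
    simp only [sub_zero, one_pow, sub_self, zero_add, Nat.cast_add, Nat.cast_ofNat]
    gcongr; norm_num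
  filter_upwards [hI, nhdsWithin_le_nhds (hEj.continuousAt.eventually_lt continuousAt_const hEj0)]
    with p hp hpε
  exact (Estar_le_E hp.1.le hp.2.le ⟨m + 2, by omega⟩).trans_lt hpε

end Dorfman

theorem sup_loss_small_k (k : ℕ) (hk1 : 1 ≤ k) (hk7 : k ≤ 7) :
    sSup (L k '' Set.Ioo (0:ℝ) 1) = 1 / k ∧
    ∀ p ∈ Set.Ioo (0:ℝ) 1, L k p < 1 / k := by
  have hlt : ∀ p ∈ Ioo (0:ℝ) 1, L k p < 1 / k := fun p ⟨hp0, hp1⟩ => by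
    have := E_sub_one_div_le_one_sub_pow hk1 hk7 hp0.le hp1.le
    have := one_sub_pow_seven_lt_Estar hp0 hp1
    unfold L; linarith
  refine ⟨le_antisymm (csSup_le ((nonempty_Ioo.2 one_pos).image (L k)) ?_) ?_, hlt⟩
  · rintro _ ⟨p, hp, rfl⟩
    exact (hlt p hp).le
  · have hbdd : BddAbove (L k '' Ioo 0 1) := ⟨1 / k, by rintro _ ⟨p, hp, rfl⟩; exact (hlt p hp).le⟩
    have hlim : Tendsto (fun p => 1 / (k : ℝ) - Estar p) (𝓝[>] 0) (𝓝 (1 / k)) := by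
      simpa using tendsto_Estar_nhdsGT_zero.const_sub (1 / (k : ℝ))
    refine le_of_tendsto hlim ?_
    filter_upwards [Ioo_mem_nhdsGT one_pos] with p hp
    refine le_csSup_of_le hbdd (mem_image_of_mem _ hp) ?_
    have := one_div_le_E hk1 hp.1.le hp.2.le
    unfold L; linarith
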